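/- Let c : {(x,y) ∈ ℚ × ℚ | x < y} → S be additive for a finite semigroup S, fix u < v, and define γ : (u,v) → S × S by γ(z) = (c(u,z), c(z,v)). Suppose all values of c on pairs from (u,v) ∪ {u,v} lie in one J-class. If w < z both lie in (u,v) and γ(w) = γ(z) = (l, r), then c(w,z) is R-equivalent to r and L-equivalent to l; hence all colours occurring on any γ-monochromatic set are H-equivalent to one another. -/

import Mathlib

/-- Green's R-preorder. -/
def leR {S : Type*} [Semigroup S] (s t : S) : Prop := s = t ∨ ∃ a, s = t * a
/-- Green's L-preorder. -/
def leL {S : Type*} [Semigroup S] (s t : S) : Prop := s = t ∨ ∃ a, s = a * t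
/-- Green's J-preorder. -/
def leJ {S : Type*} [Semigroup S] (s t : S) : Prop :=
  leR s t ∨ leL s t ∨ ∃ a b, s = a * t * b
/-- Green's R-equivalence. -/
def eqR {S : Type*} [Semigroup S] (s t : S) : Prop := leR s t ∧ leR t s
/-- Green's L-equivalence. -/
def eqL {S : Type*} [Semigroup S] (s t : S) : Prop := leL s t ∧ leL t s
/-- Green's J-equivalence. -/
def eqJ {S : Type*} [Semigroup S] (s t : S) : Prop := leJ s t ∧ leJ t s
/-- Green's H-equivalence. -/
def eqH {S : Type*} [Semigroup S] (s t : S) : Prop := eqR s t ∧ eqL s t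

/-! Additivity gives `c(w,z) * r = c(w,v) = r` and `l * c(w,z) = c(u,z) = l`, so `r ≤_R c(w,z)` and
`l ≤_L c(w,z)`. All these colours lie in one J-class, and in a finite semigroup two J-equivalent
elements comparable under `≤_R` (resp. `≤_L`) are R- (resp. L-) equivalent. The H-class statement
follows by transitivity. -/

instance {α : Type*} [Finite α] : Finite (WithOne α) := inferInstanceAs (Finite (Option α))

instance {α : Type*} [Finite α] : Finite αᵐᵒᵖ := .of_equiv α MulOpposite.opEquiv

section Stability

variable {M : Type*} [Monoid M] [Finite M]

/- Iterating `t = p * t * (a * q)` gives `t = p ^ n * t * (a * q) ^ n`; once `p ^ m = p ^ n` with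
`m < n`, the left factors cancel out and `t = t * (a * q) ^ (n - m)`. -/
theorem exists_eq_mul_right_of_eq_mul_of_eq_mul_mul {s t a p q : M} (ha : s = t * a)
    (hpq : t = p * s * q) : ∃ b, t = s * b := by
  set x := a * q with hx
  have hstep : t = p * t * x := by
    conv_lhs => rw [hpq, ha]
    simp only [hx, mul_assoc]
  have hpow : ∀ n, t = p ^ n * t * x ^ n := by
    intro n
    induction n with
    | zero => simp
    | succ n ih =>
      calc t = p * (p ^ n * t * x ^ n) * x := by rw [← ih, ← hstep]
        _ = p ^ (n + 1) * t * x ^ (n + 1) := by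
          rw [pow_succ' p, pow_succ x]; simp only [mul_assoc]
  obtain ⟨m, n, hmn, hpmn⟩ := Set.finite_univ.exists_lt_map_eq_of_forall_mem
    (f := fun n ↦ p ^ n) fun _ ↦ Set.mem_univ _
  obtain ⟨k, rfl⟩ := Nat.exists_eq_add_of_lt hmn
  refine ⟨q * x ^ k, ?_⟩
  calc t = p ^ m * t * x ^ m * x ^ (k + 1) := by
        rw [mul_assoc _ (x ^ m), ← pow_add, hpmn, ← add_assoc]; exact hpow _
    _ = t * x * x ^ k := by rw [← hpow m, pow_succ', ← mul_assoc]
    _ = s * (q * x ^ k) := by rw [ha, mul_assoc t, hx, mul_assoc, mul_assoc]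

theorem exists_eq_mul_left_of_eq_mul_of_eq_mul_mul {s t a p q : M} (ha : s = a * t)
    (hpq : t = p * s * q) : ∃ b, t = b * s := by
  open MulOpposite in
  obtain ⟨b, hb⟩ := exists_eq_mul_right_of_eq_mul_of_eq_mul_mul (s := op s) (t := op t)
    (a := op a) (p := op q) (q := op p) (by rw [ha, op_mul]) (by rw [hpq, op_mul, op_mul, mul_assoc])
  exact ⟨b.unop, by simpa using congrArg unop hb⟩

end Stability

section Green

variable {S : Type*} [Semigroup S] {s t u : S}

theorem leR_iff_exists_withOne : leR s t ↔ ∃ a : WithOne S, (s : WithOne S) = t * a := by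
  constructor
  · rintro (rfl | ⟨a, rfl⟩)
    exacts [⟨1, (mul_one _).symm⟩, ⟨a, WithOne.coe_mul _ _⟩]
  · rintro ⟨a, ha⟩
    induction a using WithOne.recOneCoe with
    | one => exact Or.inl (WithOne.coe_inj.1 (by rwa [mul_one] at ha))
    | coe a => exact Or.inr ⟨a, WithOne.coe_inj.1 (by rwa [WithOne.coe_mul])⟩

theorem leL_iff_exists_withOne : leL s t ↔ ∃ a : WithOne S, (s : WithOne S) = a * t := by
  constructor
  · rintro (rfl | ⟨a, rfl⟩)
    exacts [⟨1, (one_mul _).symm⟩, ⟨a, WithOne.coe_mul _ _⟩]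
  · rintro ⟨a, ha⟩
    induction a using WithOne.recOneCoe with
    | one => exact Or.inl (WithOne.coe_inj.1 (by rwa [one_mul] at ha))
    | coe a => exact Or.inr ⟨a, WithOne.coe_inj.1 (by rwa [WithOne.coe_mul])⟩

theorem leJ.exists_withOne (h : leJ s t) : ∃ p q : WithOne S, (s : WithOne S) = p * t * q := by
  rcases h with h | h | ⟨a, b, rfl⟩
  · obtain ⟨q, hq⟩ := leR_iff_exists_withOne.1 h
    exact ⟨1, q, by rw [one_mul, hq]⟩
  · obtain ⟨p, hp⟩ := leL_iff_exists_withOne.1 h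
    exact ⟨p, 1, by rw [mul_one, hp]⟩
  · exact ⟨a, b, by simp only [WithOne.coe_mul]⟩

theorem leR_trans (h₁ : leR s t) (h₂ : leR t u) : leR s u := by
  obtain ⟨a, ha⟩ := leR_iff_exists_withOne.1 h₁
  obtain ⟨b, hb⟩ := leR_iff_exists_withOne.1 h₂
  exact leR_iff_exists_withOne.2 ⟨b * a, by rw [ha, hb, mul_assoc]⟩

theorem leL_trans (h₁ : leL s t) (h₂ : leL t u) : leL s u := by
  obtain ⟨a, ha⟩ := leL_iff_exists_withOne.1 h₁
  obtain ⟨b, hb⟩ := leL_iff_exists_withOne.1 h₂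
  exact leL_iff_exists_withOne.2 ⟨a * b, by rw [ha, hb, mul_assoc]⟩

theorem eqR.symm (h : eqR s t) : eqR t s := ⟨h.2, h.1⟩

theorem eqL.symm (h : eqL s t) : eqL t s := ⟨h.2, h.1⟩

theorem eqR.trans (h₁ : eqR s t) (h₂ : eqR t u) : eqR s u :=
  ⟨leR_trans h₁.1 h₂.1, leR_trans h₂.2 h₁.2⟩

theorem eqL.trans (h₁ : eqL s t) (h₂ : eqL t u) : eqL s u :=
  ⟨leL_trans h₁.1 h₂.1, leL_trans h₂.2 h₁.2⟩

theorem eqR_of_leR_of_leJ [Finite S] (h : leR s t) (hJ : leJ t s) : eqR s t := by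
  obtain ⟨a, ha⟩ := leR_iff_exists_withOne.1 h
  obtain ⟨p, q, hpq⟩ := hJ.exists_withOne
  exact ⟨h, leR_iff_exists_withOne.2 (exists_eq_mul_right_of_eq_mul_of_eq_mul_mul ha hpq)⟩

theorem eqL_of_leL_of_leJ [Finite S] (h : leL s t) (hJ : leJ t s) : eqL s t := by
  obtain ⟨a, ha⟩ := leL_iff_exists_withOne.1 h
  obtain ⟨p, q, hpq⟩ := hJ.exists_withOne
  exact ⟨h, leL_iff_exists_withOne.2 (exists_eq_mul_left_of_eq_mul_of_eq_mul_mul ha hpq)⟩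

end Green

def IsAdditiveColoring {α S : Type*} [LT α] [Mul S] (c : α → α → S) : Prop :=
  ∀ x y z, x < y → y < z → c x z = c x y * c y z

namespace IsAdditiveColoring

variable {α S : Type*} [LT α] [Semigroup S] [Finite S] {c : α → α → S}

theorem eqR_of_eq_right (hc : IsAdditiveColoring c) {w z v : α} (hwz : w < z) (hzv : z < v)
    (hv : c w v = c z v) (hJ : leJ (c w z) (c z v)) : eqR (c w z) (c z v) :=
  (eqR_of_leR_of_leJ (Or.inr ⟨c z v, by rw [← hc w z v hwz hzv, hv]⟩) hJ).symm

theorem eqL_of_eq_left (hc : IsAdditiveColoring c) {u w z : α} (huw : u < w) (hwz : w < z)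
    (hu : c u z = c u w) (hJ : leJ (c w z) (c u w)) : eqL (c w z) (c u w) :=
  (eqL_of_leL_of_leJ (Or.inr ⟨c u w, by rw [← hc u w z huw hwz, hu]⟩) hJ).symm

end IsAdditiveColoring

theorem gamma_monochromatic_Hclass_general (S : Type*) [Semigroup S] [Fintype S]
    (c : ℚ → ℚ → S)
    (hadd : ∀ x y z : ℚ, x < y → y < z → c x z = c x y * c y z)
    (u v : ℚ)
    (hJ : ∀ a b a' b' : ℚ, a ∈ Set.Icc u v → b ∈ Set.Icc u v →
      a' ∈ Set.Icc u v → b' ∈ Set.Icc u v → a < b → a' < b' →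
      eqJ (c a b) (c a' b'))
    (l r : S) (w z : ℚ) (hw : w ∈ Set.Ioo u v) (hz : z ∈ Set.Ioo u v) (hwz : w < z)
    (hγw : c u w = l ∧ c w v = r) (hγz : c u z = l ∧ c z v = r) :
    eqR (c w z) r ∧ eqL (c w z) l ∧
      (∀ w' z' : ℚ, w' ∈ Set.Ioo u v → z' ∈ Set.Ioo u v → w' < z' →
        c u w' = l → c w' v = r → c u z' = l → c z' v = r →
        eqH (c w z) (c w' z')) := by
  have hc : IsAdditiveColoring c := hadd
  have hI : Set.Ioo u v ⊆ Set.Icc u v := Set.Ioo_subset_Icc_self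
  have hu : u ∈ Set.Icc u v := Set.left_mem_Icc.2 (hw.1.trans hw.2).le
  have hv : v ∈ Set.Icc u v := Set.right_mem_Icc.2 (hw.1.trans hw.2).le
  have key : ∀ w' z' : ℚ, w' ∈ Set.Ioo u v → z' ∈ Set.Ioo u v → w' < z' →
      c u w' = l → c w' v = r → c u z' = l → c z' v = r →
      eqR (c w' z') r ∧ eqL (c w' z') l := by
    intro w' z' hw' hz' hwz' h₁ h₂ h₃ h₄
    constructor
    · rw [← h₄]
      exact hc.eqR_of_eq_right hwz' hz'.2 (h₂.trans h₄.symm)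
        (hJ w' z' z' v (hI hw') (hI hz') (hI hz') hv hwz' hz'.2).1
    · rw [← h₁]
      exact hc.eqL_of_eq_left hw'.1 hwz' (h₃.trans h₁.symm)
        (hJ w' z' u w' (hI hw') (hI hz') hu (hI hw') hwz' hw'.1).1
  obtain ⟨hR, hL⟩ := key w z hw hz hwz hγw.1 hγw.2 hγz.1 hγz.2
  refine ⟨hR, hL, fun w' z' hw' hz' hwz' h₁ h₂ h₃ h₄ ↦ ?_⟩
  obtain ⟨hR', hL'⟩ := key w' z' hw' hz' hwz' h₁ h₂ h₃ h₄
  exact ⟨hR.trans hR'.symm, hL.trans hL'.symm⟩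

/-- for an additive colouring with all values on [u,v] in one J-class,
if w < z have the same γ-value (l,r) where γ(z) = (c(u,z), c(z,v)), then c(w,z) is
R-equivalent to r and L-equivalent to l; consequently all colours on γ-monochromatic
sets are H-equivalent. -/
theorem gamma_monochromatic_Hclass (S : Type*) [Semigroup S] [Fintype S]
    (c : ℚ → ℚ → S)
    (hadd : ∀ x y z : ℚ, x < y → y < z → c x z = c x y * c y z)
    (u v : ℚ) (huv : u < v)
    (hJ : ∀ a b a' b' : ℚ, a ∈ Set.Icc u v → b ∈ Set.Icc u v →
      a' ∈ Set.Icc u v → b' ∈ Set.Icc u v → a < b → a' < b' →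
      eqJ (c a b) (c a' b'))
    (l r : S) (w z : ℚ) (hw : w ∈ Set.Ioo u v) (hz : z ∈ Set.Ioo u v) (hwz : w < z)
    (hγw : c u w = l ∧ c w v = r) (hγz : c u z = l ∧ c z v = r) :
    eqR (c w z) r ∧ eqL (c w z) l ∧
      (∀ w' z' : ℚ, w' ∈ Set.Ioo u v → z' ∈ Set.Ioo u v → w' < z' →
        c u w' = l → c w' v = r → c u z' = l → c z' v = r →
        eqH (c w z) (c w' z')) :=
  gamma_monochromatic_Hclass_general S c hadd u v hJ l r w z hw hz hwz hγw hγz
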